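/- Let y ∈ ℝⁿ, t > 0, ε ∈ (0,1), and suppose ‖y − p/q‖_∞ ≤ ε/e^t for some (p,q) ∈ ℤⁿ × ℤ with 0 < q < e^t. Let g = diag(φ ε^{-1}, …, φ ε^{-1}, φ e^{-t}) ∈ SL_{n+1}(ℝ) with φ = (εⁿ e^t)^{1/(n+1)}, and let U(y) be the (n+1)×(n+1) unipotent matrix equal to the identity except its last column, whose first n entries are (y_n, …, y_1) (i.e., y reversed) and last entry 1. Then ‖g · U(y) · (−p σ_n, q)ᵀ‖_∞ ≤ φ, where σ_n is the n×n anti-diagonal permutation matrix (so −p σ_n reverses and negates p). -/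

import Mathlib

/-! Row `i < n` of `U(y) (-pσ_n, q)ᵀ` is `q y_k - p_k` with `k` the reversed index, which is at most
`q ε / e^t ≤ ε` in absolute value and is scaled by `φ / ε`; the last row is `q < e^t`, scaled by
`φ e^{-t}`. -/

/-- The paper's `U(y)`; an `abbrev`, so that its lemmas rewrite the literal matrix of `stmt_10`. -/
abbrev revUnipotent {R : Type*} [Zero R] [One R] {n : ℕ} (y : Fin n → R) :
    Matrix (Fin (n + 1)) (Fin (n + 1)) R :=
  fun i j => if i = j then 1
    else if h : (i : ℕ) < n ∧ (j : ℕ) = n then y ⟨n - 1 - (i : ℕ), by omega⟩ else 0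

section revUnipotent

open Matrix

variable {R : Type*} [NonAssocSemiring R] {n : ℕ} (y : Fin n → R) (v : Fin (n + 1) → R)

theorem revUnipotent_mulVec_apply_of_lt (i : Fin (n + 1)) (hi : (i : ℕ) < n) :
    (revUnipotent y *ᵥ v) i = v i + y ⟨n - 1 - (i : ℕ), by omega⟩ * v (Fin.last n) := by
  have hne : i ≠ Fin.last n := Fin.ne_of_lt hi
  rw [Matrix.mulVec, dotProduct, Fintype.sum_eq_add i (Fin.last n) hne]
  · simp [hne, hi]
  · rintro j ⟨hji, hjl⟩
    have hjn : (j : ℕ) ≠ n := fun h => hjl (Fin.ext h)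
    simp [Ne.symm hji, hjn]

theorem revUnipotent_mulVec_apply_last :
    (revUnipotent y *ᵥ v) (Fin.last n) = v (Fin.last n) := by
  rw [Matrix.mulVec, dotProduct, Fintype.sum_eq_single (Fin.last n)]
  · simp
  · intro j hj
    simp [Ne.symm hj]

end revUnipotent

theorem abs_mul_sub_le_of_abs_sub_div_le {y p q T ε : ℝ} (hq : 0 < q) (hqT : q ≤ T)
    (h : |y - p / q| ≤ ε / T) : |y * q - p| ≤ ε := by
  have hT : 0 < T := hq.trans_le hqT
  calc |y * q - p| = q * |y - p / q| := by
        rw [← abs_of_pos hq, ← abs_mul, abs_of_pos hq, mul_sub, mul_div_cancel₀ _ hq.ne', mul_comm]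
    _ ≤ T * (ε / T) := mul_le_mul hqT h (abs_nonneg _) hT.le
    _ = ε := mul_div_cancel₀ ε hT.ne'

theorem abs_div_mul_le_of_abs_le {φ ε x : ℝ} (hφ : 0 ≤ φ) (hε : 0 < ε) (hx : |x| ≤ ε) :
    |φ / ε * x| ≤ φ := by
  rw [abs_mul, abs_of_nonneg (div_nonneg hφ hε.le)]
  calc φ / ε * |x| ≤ φ / ε * ε := by gcongr
    _ = φ := div_mul_cancel₀ φ hε.ne'

theorem abs_mul_exp_neg_mul_le {φ q t : ℝ} (hφ : 0 ≤ φ) (hq : 0 ≤ q) (hqt : q ≤ Real.exp t) :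
    |φ * Real.exp (-t) * q| ≤ φ := by
  rw [abs_of_nonneg (by positivity), mul_assoc, Real.exp_neg]
  exact mul_le_of_le_one_right hφ (inv_mul_le_one_of_le₀ hqt (Real.exp_pos t).le)

open Matrix in
/-- Lemma 4.1 of Beresnevich–Yang with `Θ = 0`: if `‖y - p/q‖_∞ ≤ ε/e^t` with
`0 < q < e^t`, then `‖g_{ε,t} U(y) (-pσ_n, q)ᵀ‖_∞ ≤ φ` where
`φ = (ε^n e^t)^{1/(n+1)}`, `g_{ε,t} = diag(φ/ε,…,φ/ε,φe^{-t})` and `U(y)` is the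
unipotent matrix with last column `(y_n,…,y_1,1)ᵀ`. -/
theorem stmt_10 (n : ℕ) (y : Fin n → ℝ) (p : Fin n → ℤ) (q : ℤ)
    (ε t : ℝ) (hε0 : 0 < ε)
    (hq0 : 0 < q) (hq1 : (q : ℝ) < Real.exp t)
    (happrox : ∀ i : Fin n, |y i - (p i : ℝ) / (q : ℝ)| ≤ ε / Real.exp t) :
    ∀ i : Fin (n + 1),
      |(Matrix.mulVec
          (Matrix.diagonal (fun i : Fin (n + 1) =>
            if (i : ℕ) < n then (ε ^ n * Real.exp t) ^ ((1 : ℝ) / (n + 1)) / ε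
            else (ε ^ n * Real.exp t) ^ ((1 : ℝ) / (n + 1)) * Real.exp (-t)))
          (Matrix.mulVec
            (fun i j : Fin (n + 1) =>
              if i = j then 1
              else if h : (i : ℕ) < n ∧ (j : ℕ) = n then
                y ⟨n - 1 - (i : ℕ), by omega⟩
              else 0)
            (fun i : Fin (n + 1) =>
              if h : (i : ℕ) < n then -(p ⟨n - 1 - (i : ℕ), by omega⟩ : ℝ)
              else (q : ℝ)))) i|
        ≤ (ε ^ n * Real.exp t) ^ ((1 : ℝ) / (n + 1)) := by
  intro i
  have hφ : 0 ≤ (ε ^ n * Real.exp t) ^ ((1 : ℝ) / (n + 1)) := by positivity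
  have hqR : (0 : ℝ) < q := by exact_mod_cast hq0
  rw [Matrix.mulVec_diagonal]
  by_cases hi : (i : ℕ) < n
  · rw [if_pos hi, revUnipotent_mulVec_apply_of_lt y _ i hi]
    simp only [dif_pos hi, Fin.val_last, lt_irrefl, dite_false, neg_add_eq_sub]
    exact abs_div_mul_le_of_abs_le hφ hε0
      (abs_mul_sub_le_of_abs_sub_div_le hqR hq1.le (happrox _))
  · obtain rfl : i = Fin.last n := Fin.ext (by simp; omega)
    rw [if_neg hi, revUnipotent_mulVec_apply_last]
    simp only [Fin.val_last, lt_irrefl, dite_false]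
    exact abs_mul_exp_neg_mul_le hφ hqR.le hq1.le
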